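/- arXiv:2410.12131 — 2 statements merged into one kernel-verified Lean document; each statement's English description precedes it below -/
import Mathlib

section
/- Let γ : ℝ/ℤ → ℝ² be an injective, regular C¹ closed curve (i.e., its derivative is continuous and nowhere zero). Then γ is bi-Lipschitz from below: there exists M > 0 such that |γ(s) − γ(t)| ≥ M·d(s,t) for all s, t ∈ ℝ/ℤ, where d is the intrinsic distance on ℝ/ℤ. -/
/-!
Near the diagonal the derivative barely moves (γ' is periodic, hence uniformly continuous),
so `γ s - γ t` stays close to `(s - t) • γ' t` and has length at least `(min ‖γ'‖ / 2) * |s - t|`.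
Away from the diagonal, injectivity of the induced map on the compact circle `ℝ/ℤ` bounds
`‖γ s - γ t‖` below by some `δ > 0`, while `d(s, t) ≤ 1/2`.
-/

open Function Set

theorem Function.Periodic.deriv {𝕜 F : Type*} [NontriviallyNormedField 𝕜] [NormedAddCommGroup F]
    [NormedSpace 𝕜 F] {f : 𝕜 → F} {c : 𝕜} (hp : Periodic f c) : Periodic (deriv f) c := by
  intro x
  rw [← deriv_comp_add_const, funext hp]

theorem Function.Periodic.continuous_lift {α : Type*} [TopologicalSpace α] {f : ℝ → α} {c : ℝ}
    (hp : Periodic f c) (hf : Continuous f) : Continuous (hp.lift : AddCircle c → α) :=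
  hf.quotient_liftOn' _

theorem Function.Periodic.uniformContinuous_of_continuous {α : Type*} [PseudoMetricSpace α]
    {f : ℝ → α} {c : ℝ} (hp : Periodic f c) (hc : 0 < c) (hf : Continuous f) :
    UniformContinuous f := by
  have : Fact (0 < c) := ⟨hc⟩
  have hcoe : UniformContinuous ((↑) : ℝ → AddCircle c) :=
    LipschitzWith.uniformContinuous (K := 1) <| LipschitzWith.of_dist_le_mul fun x y => by
      simpa [dist_eq_norm, ← QuotientAddGroup.mk_sub] using
        QuotientAddGroup.norm_mk_le_norm (S := AddSubgroup.zmultiples c) (m := x - y)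
  exact (CompactSpace.uniformContinuous_of_continuous (hp.continuous_lift hf)).comp hcoe

theorem AddCircle.exists_coe_eq_and_abs_sub_eq_dist (p s t : ℝ) :
    ∃ t' : ℝ, (t' : AddCircle p) = t ∧ |s - t'| = dist (s : AddCircle p) t := by
  refine ⟨t + round (p⁻¹ * (s - t)) * p, ?_, ?_⟩
  · rw [QuotientAddGroup.mk_add, add_eq_left, QuotientAddGroup.eq_zero_iff]
    exact AddSubgroup.mem_zmultiples_iff.mpr ⟨round (p⁻¹ * (s - t)), by simp⟩
  · rw [dist_eq_norm, ← QuotientAddGroup.mk_sub, AddCircle.norm_eq]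
    ring_nf

theorem Continuous.exists_pos_le_dist_of_injective {X Y : Type*} [MetricSpace X]
    [CompactSpace X] [MetricSpace Y] {f : X → Y} (hf : Continuous f) (hinj : Injective f)
    {ε : ℝ} (hε : 0 < ε) : ∃ δ > 0, ∀ x y, ε ≤ dist x y → δ ≤ dist (f x) (f y) := by
  have hK : IsCompact {p : X × X | ε ≤ dist p.1 p.2} :=
    (isClosed_le continuous_const continuous_dist).isCompact
  obtain ⟨δ, hδ, hle⟩ := hK.exists_forall_le' (a := 0)
    ((hf.comp continuous_fst).dist (hf.comp continuous_snd)).continuousOn fun p hp =>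
      dist_pos.mpr (hinj.ne (dist_pos.mp (hε.trans_le (show ε ≤ dist p.1 p.2 from hp))))
  exact ⟨δ, hδ, fun x y hxy => hle (x, y) hxy⟩

theorem mul_abs_sub_le_norm_image_sub_of_norm_deriv_sub_le {E : Type*} [NormedAddCommGroup E]
    [NormedSpace ℝ E] {f : ℝ → E} {s t c : ℝ} (hf : ∀ u ∈ uIcc t s, DifferentiableAt ℝ f u)
    (hc : ∀ u ∈ uIcc t s, ‖deriv f u - deriv f t‖ ≤ c) :
    (‖deriv f t‖ - c) * |s - t| ≤ ‖f s - f t‖ := by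
  have hlin : ‖f s - f t - (s - t) • deriv f t‖ ≤ c * |s - t| := by
    have hg : ∀ u ∈ uIcc t s,
        HasDerivWithinAt (fun u => f u - u • deriv f t) (deriv f u - deriv f t) (uIcc t s) u :=
      fun u hu => ((hf u hu).hasDerivAt.sub ((hasDerivAt_id u).smul_const _ |>.congr_deriv
        (one_smul _ _))).hasDerivWithinAt
    simpa [sub_smul, sub_sub_sub_comm, Real.norm_eq_abs] using
      (convex_uIcc t s).norm_image_sub_le_of_norm_hasDerivWithin_le hg hc left_mem_uIcc
        right_mem_uIcc
  calc (‖deriv f t‖ - c) * |s - t|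
      = ‖(s - t) • deriv f t‖ - c * |s - t| := by rw [norm_smul, Real.norm_eq_abs]; ring
    _ ≤ ‖f s - f t‖ := by
      have := norm_le_norm_add_norm_sub' ((s - t) • deriv f t) (f s - f t)
      rw [norm_sub_rev ((s - t) • deriv f t)] at this
      linarith

theorem sub_mul_abs_sub_le_norm_sub_of_dist_lt {E : Type*}
    [NormedAddCommGroup E] [NormedSpace ℝ E] {f : ℝ → E} (hf : Differentiable ℝ f) {m c ε : ℝ}
    (hm : ∀ u, m ≤ ‖deriv f u‖)
    (hosc : ∀ ⦃u v : ℝ⦄, dist u v < ε → dist (deriv f u) (deriv f v) < c)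
    {s t : ℝ} (hst : |s - t| < ε) : (m - c) * |s - t| ≤ ‖f s - f t‖ :=
  calc (m - c) * |s - t| ≤ (‖deriv f t‖ - c) * |s - t| := by gcongr; exact hm t
    _ ≤ ‖f s - f t‖ := mul_abs_sub_le_norm_image_sub_of_norm_deriv_sub_le (fun u _ => hf u)
        fun u hu => by
          rw [← dist_eq_norm]
          exact (hosc ((abs_sub_left_of_mem_uIcc hu).trans_lt hst)).le

/-- An injective, regular C¹ closed curve γ : ℝ/ℤ → ℝ² is bi-Lipschitz
from below w.r.t. the intrinsic distance on ℝ/ℤ. We model ℝ/ℤ-curves as 1-periodic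
functions ℝ → ℂ, injectivity as injectivity modulo 1, and the intrinsic distance as
the quotient distance on `AddCircle (1 : ℝ)`. -/
theorem stmt_0 (γ : ℝ → ℂ) (hper : Function.Periodic γ 1)
    (hC1 : ContDiff ℝ 1 γ) (hreg : ∀ t : ℝ, deriv γ t ≠ 0)
    (hinj : ∀ s t : ℝ, γ s = γ t → (s : AddCircle (1 : ℝ)) = (t : ℝ)) :
    ∃ M > (0 : ℝ), ∀ s t : ℝ,
      M * dist (s : AddCircle (1 : ℝ)) (t : ℝ) ≤ ‖γ s - γ t‖ := by
  have hγ' : Continuous (deriv γ) := hC1.continuous_deriv le_rfl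
  obtain ⟨m, hm, hm_le⟩ := (hper.deriv.compact_of_continuous one_ne_zero hγ').exists_forall_le'
    continuous_norm.continuousOn (a := 0) (by rintro _ ⟨t, rfl⟩; exact norm_pos_iff.mpr (hreg t))
  obtain ⟨ε, hε, hosc⟩ := Metric.uniformContinuous_iff.mp
    (hper.deriv.uniformContinuous_of_continuous one_pos hγ') (m / 2) (half_pos hm)
  have hlift_inj : Injective (hper.lift : AddCircle (1 : ℝ) → ℂ) := by
    rintro ⟨s⟩ ⟨t⟩ h
    exact hinj s t h
  obtain ⟨δ, hδ, hfar⟩ :=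
    (hper.continuous_lift hC1.continuous).exists_pos_le_dist_of_injective hlift_inj hε
  refine ⟨min (m / 2) (2 * δ), by positivity, fun s t => ?_⟩
  obtain ⟨t', ht', hdist⟩ := AddCircle.exists_coe_eq_and_abs_sub_eq_dist 1 s t
  have hγt' : γ t' = γ t := by simpa using congrArg hper.lift ht'
  rw [← ht'] at hdist ⊢
  rw [← hγt', ← hdist]
  rcases lt_or_ge |s - t'| ε with hnear | hfar'
  · calc min (m / 2) (2 * δ) * |s - t'| ≤ (m - m / 2) * |s - t'| := by
          gcongr; linarith [min_le_left (m / 2) (2 * δ)]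
      _ ≤ ‖γ s - γ t'‖ := sub_mul_abs_sub_le_norm_sub_of_dist_lt (hC1.differentiable one_ne_zero)
          (fun u => hm_le _ (mem_range_self u)) hosc hnear
  · have hhalf : |s - t'| ≤ 1 / 2 := by
      simpa [hdist, dist_eq_norm] using
        AddCircle.norm_le_half_period (p := (1 : ℝ)) (x := s - t') one_ne_zero
    calc min (m / 2) (2 * δ) * |s - t'| ≤ 2 * δ * (1 / 2) := by
          gcongr; exact min_le_right _ _
      _ = δ := by ring
      _ ≤ ‖γ s - γ t'‖ := by
          simpa [dist_eq_norm] using hfar s t' (hdist ▸ hfar')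
end

section
/- Let γ_ε : ℝ/ℤ → ℝ² be constant-speed Lipschitz closed curves converging uniformly to a Lipschitz closed curve γ as ε → 0, with |int(γ_ε)| = ε, ω(γ_ε, x) ∈ {0,1} off the images, and all images contained in a fixed bounded set. Then ω(γ, x) = 0 for every x ∉ γ(ℝ/ℤ), i.e., |int(γ)| = 0. -/
open MeasureTheory Set Filter

/-- Winding number of a closed curve (1-periodic map ℝ → ℂ) around a point. -/
noncomputable def winding (γ : ℝ → ℂ) (x : ℂ) : ℂ :=
  (2 * Real.pi * Complex.I)⁻¹ * ∫ t in (0:ℝ)..1, deriv γ t / (γ t - x)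

/-- The interior of a closed curve: points off the image with winding number one. -/
def curveInterior (γ : ℝ → ℂ) : Set ℂ :=
  {x | x ∉ Set.range γ ∧ winding γ x = 1}

/-! If `x` lies at distance `d` from the image of `γ`, then for small `ε` the curve `c ε` is
uniformly within `d / 6` of `γ`, so for every `y` in the ball `B(x, d / 3)` we can write
`c ε - y = (γ - x) q` with `q` taking values in the disc `|q - 1| ≤ 1 / 2`. The logarithmic
derivatives of `c ε - y` and `γ - x` then differ by the derivative of the Lipschitz periodic
function `log ∘ q`, whose integral over a period vanishes, so `ω(c ε, y) = ω(γ, x)` on the whole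
ball. Since `ω(c ε, x) ∈ {0, 1}`, if `ω(γ, x) ≠ 0` the ball lies in `int(c ε)`, which is
impossible once `ε` is smaller than the area of the ball. -/

open Topology NNReal

section FundamentalTheorem

variable {E : Type*} [NormedAddCommGroup E] [NormedSpace ℝ E] [FiniteDimensional ℝ E]

theorem LipschitzWith.intervalIntegrable_deriv {f : ℝ → E} {K : ℝ≥0} (hf : LipschitzWith K f)
    (a b : ℝ) : IntervalIntegrable (deriv f) volume a b :=
  (intervalIntegrable_const (c := (K : ℝ))).mono_fun
    (stronglyMeasurable_deriv f).aestronglyMeasurable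
    (Eventually.of_forall fun _ => by simpa using norm_deriv_le_of_lipschitz hf)

theorem LipschitzWith.integral_deriv_eq_sub {f : ℝ → E} {K : ℝ≥0} (hf : LipschitzWith K f)
    (a b : ℝ) : ∫ t in a..b, deriv f t = f b - f a := by
  -- The library's FTC for absolutely continuous functions is real-valued: test against the dual.
  refine (SeparatingDual.eq_iff_forall_dual_eq (R := ℝ)).2 fun φ => ?_
  have hφf : LipschitzWith (‖φ‖₊ * K) (φ ∘ f) := φ.lipschitz.comp hf
  rw [← φ.intervalIntegral_comp_comm (hf.intervalIntegrable_deriv a b), map_sub]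
  refine (intervalIntegral.integral_congr_ae ?_).trans
    (hφf.lipschitzOnWith (s := uIcc a b)).absolutelyContinuousOnInterval.integral_deriv_eq_sub
  filter_upwards [hf.ae_differentiableAt (μ := volume)] with t ht _
  exact (φ.hasFDerivAt.comp_hasDerivAt t ht.hasDerivAt).deriv.symm

end FundamentalTheorem

theorem LipschitzWith.div_of_norm_le {α 𝕜 : Type*} [PseudoMetricSpace α] [NormedField 𝕜]
    {u v : α → 𝕜} {Ku Kv : ℝ≥0} {M m : ℝ} (hu : LipschitzWith Ku u) (hv : LipschitzWith Kv v)
    (huM : ∀ a, ‖u a‖ ≤ M) (hm : 0 < m) (hvm : ∀ a, m ≤ ‖v a‖) :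
    ∃ K, LipschitzWith K fun a => u a / v a := by
  refine ⟨Real.toNNReal (Ku / m + M * Kv / m ^ 2), LipschitzWith.of_dist_le_mul fun a b => ?_⟩
  have hv0 : ∀ a, v a ≠ 0 := fun a => norm_pos_iff.1 (hm.trans_le (hvm a))
  have hM : 0 ≤ M := (norm_nonneg _).trans (huM a)
  have key : u a / v a - u b / v b = (u a - u b) / v a + u b * (v b - v a) / (v a * v b) := by
    field_simp [hv0 a, hv0 b]
    ring
  rw [dist_eq_norm (u a / v a), key, Real.coe_toNNReal _ (by positivity)]
  calc ‖(u a - u b) / v a + u b * (v b - v a) / (v a * v b)‖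
      ≤ ‖u a - u b‖ / ‖v a‖ + ‖u b‖ * ‖v b - v a‖ / (‖v a‖ * ‖v b‖) := by
        simpa only [norm_div, norm_mul] using
          norm_add_le ((u a - u b) / v a) (u b * (v b - v a) / (v a * v b))
    _ ≤ Ku * dist a b / m + M * (Kv * dist b a) / (m * m) := by
        rw [← dist_eq_norm (u a), ← dist_eq_norm (v b)]
        gcongr
        exacts [hu.dist_le_mul a b, hvm a, huM b, hv.dist_le_mul b a, hvm a, hvm b]
    _ = (Ku / m + M * Kv / m ^ 2) * dist a b := by
        rw [dist_comm b a]
        field_simp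

theorem Complex.lipschitzOnWith_log_closedBall_one :
    LipschitzOnWith 2 log (Metric.closedBall 1 (1 / 2)) := by
  refine (convex_closedBall _ _).lipschitzOnWith_of_nnnorm_hasDerivWithin_le
    (fun z hz => (hasDerivAt_log ?_).hasDerivWithinAt) fun z hz => ?_
  · exact ball_one_subset_slitPlane (Metric.closedBall_subset_ball (by norm_num) hz)
  · have hz' : 1 / 2 ≤ ‖z‖ := by
      have := norm_sub_norm_le 1 z
      rw [norm_sub_rev] at this
      linarith [mem_closedBall_iff_norm.1 hz, norm_one (α := ℂ)]
    rw [← NNReal.coe_le_coe, coe_nnnorm, norm_inv]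
    push_cast
    rw [inv_le_comm₀ (by linarith) two_pos]
    linarith

theorem div_mem_closedBall_one {𝕜 : Type*} [NormedField 𝕜] {a b : 𝕜} {d : ℝ} (hd : 0 < d)
    (hb : d ≤ ‖b‖) (hab : ‖a - b‖ ≤ d / 2) : a / b ∈ Metric.closedBall 1 (1 / 2) := by
  have hb0 : 0 < ‖b‖ := hd.trans_le hb
  rw [mem_closedBall_iff_norm, div_sub_one (norm_pos_iff.1 hb0), norm_div, div_le_iff₀ hb0]
  linarith

theorem deriv_clog_div_real {f g : ℝ → ℂ} {t : ℝ} (hf : DifferentiableAt ℝ f t)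
    (hg : DifferentiableAt ℝ g t) (hg0 : g t ≠ 0) (hfg : f t / g t ∈ Complex.slitPlane) :
    deriv (fun s => Complex.log (f s / g s)) t = deriv f t / f t - deriv g t / g t := by
  have hf0 : f t ≠ 0 := fun h => Complex.slitPlane_ne_zero hfg (by simp [h])
  have hfg' : HasDerivAt (fun s => f s / g s) _ t := hf.hasDerivAt.div hg.hasDerivAt hg0
  rw [(hfg'.clog_real hfg).deriv]
  field_simp

theorem winding_eq_of_norm_sub_le {γ₁ γ₂ : ℝ → ℂ} {L₁ L₂ : ℝ≥0} (h₁ : LipschitzWith L₁ γ₁)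
    (h₂ : LipschitzWith L₂ γ₂) (hp₁ : Function.Periodic γ₁ 1) (hp₂ : Function.Periodic γ₂ 1)
    {x y : ℂ} {d : ℝ} (hd : 0 < d) (hfar : ∀ t, d ≤ ‖γ₁ t - x‖)
    (hclose : ∀ t, ‖(γ₂ t - y) - (γ₁ t - x)‖ ≤ d / 2) :
    winding γ₂ y = winding γ₁ x := by
  set q : ℝ → ℂ := fun t => (γ₂ t - y) / (γ₁ t - x)
  have hne : ∀ t, γ₁ t - x ≠ 0 := fun t => norm_pos_iff.1 (hd.trans_le (hfar t))
  have hq_mem : ∀ t, q t ∈ Metric.closedBall 1 (1 / 2) := fun t =>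
    div_mem_closedBall_one hd (hfar t) (hclose t)
  have hq_slit : ∀ t, q t ∈ Complex.slitPlane := fun t =>
    Complex.ball_one_subset_slitPlane (Metric.closedBall_subset_ball (by norm_num) (hq_mem t))
  obtain ⟨K, hq_lip⟩ : ∃ K, LipschitzWith K q := by
    have hγ₁x := h₁.sub (LipschitzWith.const x)
    obtain ⟨K, hK⟩ :=
      LipschitzWith.div_of_norm_le ((h₂.sub (LipschitzWith.const y)).sub hγ₁x) hγ₁x hclose hd hfar
    have hq_eq : (fun t => 1 + ((γ₂ t - y) - (γ₁ t - x)) / (γ₁ t - x)) = q := by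
      funext t
      rw [add_div' _ _ _ (hne t)]
      ring
    exact ⟨_, hq_eq ▸ (LipschitzWith.const (1 : ℂ)).add hK⟩
  have hlog_lip : LipschitzWith (2 * K) fun t => Complex.log (q t) := by
    rw [← lipschitzOnWith_univ]
    exact Complex.lipschitzOnWith_log_closedBall_one.comp hq_lip.lipschitzOnWith
      fun t _ => hq_mem t
  have hlog_deriv : ∀ᵐ t, deriv γ₂ t / (γ₂ t - y) =
      deriv γ₁ t / (γ₁ t - x) + deriv (fun t => Complex.log (q t)) t := by
    filter_upwards [h₁.ae_differentiableAt (μ := volume), h₂.ae_differentiableAt (μ := volume)]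
      with t ht₁ ht₂
    have := deriv_clog_div_real (ht₂.sub_const y) (ht₁.sub_const x) (hne t) (hq_slit t)
    rw [deriv_sub_const, deriv_sub_const] at this
    rw [this]
    ring
  have hint : IntervalIntegrable (fun t => deriv γ₁ t / (γ₁ t - x)) volume 0 1 := by
    simp_rw [div_eq_mul_inv]
    exact (h₁.intervalIntegrable_deriv 0 1).mul_continuousOn
      ((h₁.continuous.sub continuous_const).inv₀ hne).continuousOn
  have hq_per : q 1 = q 0 := by simp only [q, hp₁.eq, hp₂.eq]
  unfold winding
  rw [intervalIntegral.integral_congr_ae (hlog_deriv.mono fun t ht _ => ht),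
    intervalIntegral.integral_add hint (hlog_lip.intervalIntegrable_deriv 0 1),
    hlog_lip.integral_deriv_eq_sub, hq_per, sub_self, add_zero]

theorem Function.Periodic.exists_pos_forall_le_norm_sub {γ : ℝ → ℂ} (hp : Function.Periodic γ 1)
    (hc : Continuous γ) {x : ℂ} (hx : x ∉ range γ) : ∃ d > 0, ∀ t, d ≤ ‖γ t - x‖ := by
  have hclosed : IsClosed (range γ) :=
    (hp.image_Icc one_pos 0 ▸ isCompact_Icc.image hc).isClosed
  refine ⟨_, (hclosed.notMem_iff_infDist_pos ⟨γ 0, 0, rfl⟩).1 hx, fun t => ?_⟩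
  rw [← dist_eq_norm, dist_comm]
  exact Metric.infDist_le_dist_of_mem (mem_range_self t)

theorem winding_eq_of_mem_ball {γ c : ℝ → ℂ} {L K : ℝ≥0} (hγ : LipschitzWith L γ)
    (hc : LipschitzWith K c) (hpγ : Function.Periodic γ 1) (hpc : Function.Periodic c 1)
    {x y : ℂ} {d : ℝ} (hd : 0 < d) (hfar : ∀ t, d ≤ ‖γ t - x‖)
    (hclose : ∀ t, ‖c t - γ t‖ ≤ d / 6) (hy : y ∈ Metric.ball x (d / 3)) :
    y ∉ range c ∧ winding c y = winding γ x := by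
  have hy' : ‖x - y‖ < d / 3 := by rwa [← dist_eq_norm, dist_comm]
  have hclose' : ∀ t, ‖(c t - y) - (γ t - x)‖ ≤ d / 2 := fun t => by
    calc ‖(c t - y) - (γ t - x)‖ = ‖(c t - γ t) + (x - y)‖ := by ring_nf
      _ ≤ d / 2 := by linarith [norm_add_le (c t - γ t) (x - y), hclose t]
  refine ⟨?_, winding_eq_of_norm_sub_le hγ hc hpγ hpc hd hfar hclose'⟩
  rintro ⟨t, rfl⟩
  have := hclose' t
  rw [sub_self, zero_sub, norm_neg] at this
  linarith [hfar t]

theorem stmt_17_general (c : ℝ → ℝ → ℂ) (γ : ℝ → ℂ)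
    (hper : ∀ ε ∈ Ioo (0:ℝ) 1, Function.Periodic (c ε) 1)
    (hlip : ∀ ε ∈ Ioo (0:ℝ) 1, ∃ L : NNReal, LipschitzWith L (c ε))
    (harea : ∀ ε ∈ Ioo (0:ℝ) 1, volume (curveInterior (c ε)) = ENNReal.ofReal ε)
    (hw : ∀ ε ∈ Ioo (0:ℝ) 1, ∀ x ∉ Set.range (c ε),
      winding (c ε) x = 0 ∨ winding (c ε) x = 1)
    (hper₀ : Function.Periodic γ 1) (K₀ : NNReal) (hlip₀ : LipschitzWith K₀ γ)
    (hunif : TendstoUniformly c γ (nhdsWithin (0:ℝ) (Ioi 0))) :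
    (∀ x ∉ Set.range γ, winding γ x = 0) ∧ volume (curveInterior γ) = 0 := by
  have hzero : ∀ x ∉ Set.range γ, winding γ x = 0 := by
    intro x hx
    obtain ⟨d, hd, hfar⟩ := hper₀.exists_pos_forall_le_norm_sub hlip₀.continuous hx
    have hvol : 0 < volume (Metric.ball x (d / 3)) := Metric.measure_ball_pos _ _ (by positivity)
    have hofReal : Tendsto ENNReal.ofReal (𝓝[>] 0) (𝓝 0) :=
      ENNReal.ofReal_zero ▸ (ENNReal.continuous_ofReal.tendsto 0).mono_left nhdsWithin_le_nhds
    have hIoo : ∀ᶠ ε in 𝓝[>] (0 : ℝ), ε ∈ Ioo 0 1 := Ioo_mem_nhdsGT one_pos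
    obtain ⟨ε, hε, hclose, hsmall⟩ := (hIoo.and
      ((Metric.tendstoUniformly_iff.1 hunif _ (by positivity : 0 < d / 6)).and
        (hofReal.eventually (gt_mem_nhds hvol)))).exists
    obtain ⟨L, hL⟩ := hlip ε hε
    have hball y (hy : y ∈ Metric.ball x (d / 3)) :=
      winding_eq_of_mem_ball hlip₀ hL hper₀ (hper ε hε) hd hfar
        (fun t => by rw [← dist_eq_norm, dist_comm]; exact (hclose t).le) hy
    have hx_ball : x ∈ Metric.ball x (d / 3) := Metric.mem_ball_self (by positivity)
    rcases hw ε hε x (hball x hx_ball).1 with h0 | h1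
    · rw [← (hball x hx_ball).2, h0]
    · have hsub : Metric.ball x (d / 3) ⊆ curveInterior (c ε) := fun y hy =>
        ⟨(hball y hy).1, by rw [(hball y hy).2, ← (hball x hx_ball).2, h1]⟩
      exact absurd ((measure_mono hsub).trans_eq (harea ε hε)) hsmall.not_ge
  have hempty : curveInterior γ = ∅ :=
    eq_empty_of_forall_notMem fun y ⟨hy, h1⟩ => zero_ne_one ((hzero y hy).symm.trans h1)
  exact ⟨hzero, hempty ▸ measure_empty⟩

/-- if constant-speed Lipschitz closed curves γ_ε with |int γ_ε| = ε,
winding numbers in {0,1} and images in a fixed bounded set converge uniformly to a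
Lipschitz closed curve γ as ε → 0⁺, then γ has zero winding number off its image
(hence |int γ| = 0). -/
theorem stmt_17 (c : ℝ → ℝ → ℂ) (γ : ℝ → ℂ)
    (hper : ∀ ε ∈ Ioo (0:ℝ) 1, Function.Periodic (c ε) 1)
    (hlip : ∀ ε ∈ Ioo (0:ℝ) 1, ∃ L : NNReal, LipschitzWith L (c ε))
    (hspeed : ∀ ε ∈ Ioo (0:ℝ) 1, ∃ ℓ > (0:ℝ), ∀ᵐ t : ℝ, ‖deriv (c ε) t‖ = ℓ)
    (harea : ∀ ε ∈ Ioo (0:ℝ) 1, volume (curveInterior (c ε)) = ENNReal.ofReal ε)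
    (hw : ∀ ε ∈ Ioo (0:ℝ) 1, ∀ x ∉ Set.range (c ε),
      winding (c ε) x = 0 ∨ winding (c ε) x = 1)
    (R : ℝ) (hR : 0 < R) (hball : ∀ ε ∈ Ioo (0:ℝ) 1, Set.range (c ε) ⊆ Metric.ball (0:ℂ) R)
    (hper₀ : Function.Periodic γ 1) (K₀ : NNReal) (hlip₀ : LipschitzWith K₀ γ)
    (hunif : TendstoUniformly c γ (nhdsWithin (0:ℝ) (Ioi 0))) :
    (∀ x ∉ Set.range γ, winding γ x = 0) ∧ volume (curveInterior γ) = 0 :=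
  stmt_17_general c γ hper hlip harea hw hper₀ K₀ hlip₀ hunif
end
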